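/- If p ∈ ℝ^d is a maximizer (i.e. all entries of p are positive, p_1 = 1, and min_{w ∈ W_d} G(p,w) ≥ min_{w ∈ W_d} G(q,w) for every q in the positive orthant), then D_2(p) = D_1(p) = max_j D_j(p), and moreover p_2 = 1/√3 and p_j = √(2/3)/(j−1) for every j ∈ {3,...,d}. -/

import Mathlib

/-!
Write `A = D_1(q)²`, `B = D_2(q)²` and `c = (2, 6, 3·2², …, 3(d−1)²)`, so that
`2A + B = ∑ cᵢ qᵢ²`. Since `min_w G(q,w) ≤ ∏ qᵢ / max(A,B)^{d/2}`, AM-GM applied to the numbers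
`cᵢ qᵢ²` gives `∏ cᵢ · (min_w G(q,w))² ≤ (3/d)^d`, with equality only if all `cᵢ qᵢ²` coincide.
The point `p*` with `cᵢ p*ᵢ² = 2` attains the bound, so a maximizer normalised by `p₁ = 1`
satisfies `cᵢ pᵢ² = 2` for every `i`, i.e. it is `p*`; for `p*` the claims about the `D_j` are
direct computations.
-/

def wvec (d : ℕ) (j : Fin d) : Fin d → ℕ :=
  fun i => if i < j then 0 else if i = j then (j : ℕ) + 1 else (i : ℕ)

noncomputable def G (d : ℕ) (p : Fin d → ℝ) (w : Fin d → ℕ) : ℝ :=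
  (∏ i, p i) / (Real.sqrt (∑ i, ((w i : ℝ)) ^ 2 * p i ^ 2)) ^ d

noncomputable def minG (d : ℕ) (p : Fin d → ℝ) : ℝ :=
  ⨅ j : Fin d, G d p (wvec d j)

noncomputable def D (d : ℕ) (j : Fin d) (p : Fin d → ℝ) : ℝ :=
  Real.sqrt (∑ i, ((wvec d j i : ℝ)) ^ 2 * p i ^ 2)

/-- `p*`: `p*_1 = 1`, `p*_2 = 1/√3`, `p*_j = √(2/3)/(j−1)` for `3 ≤ j ≤ d`
(0-based: index `i` has 1-based position `i+1`, so the denominator `j−1` is `i`). -/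
noncomputable def pstar (d : ℕ) : Fin d → ℝ :=
  fun i => if (i : ℕ) = 0 then 1 else if (i : ℕ) = 1 then 1 / Real.sqrt 3
    else Real.sqrt (2 / 3) / ((i : ℕ) : ℝ)

open Finset

theorem Real.eq_of_arith_mean_pow_card_le_prod {ι : Type*} {s : Finset ι} (hs : s.Nonempty)
    {z : ι → ℝ} (hz : ∀ i ∈ s, 0 ≤ z i) (h : ((∑ i ∈ s, z i) / #s) ^ #s ≤ ∏ i ∈ s, z i) :
    ∀ j ∈ s, ∀ k ∈ s, z j = z k := by
  have hn : (#s : ℝ) ≠ 0 := by exact_mod_cast hs.card_pos.ne'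
  have hw : ∑ _i ∈ s, (#s : ℝ)⁻¹ = 1 := by simp [hn]
  set g := ∏ i ∈ s, z i ^ (#s : ℝ)⁻¹
  have hg : g ^ #s = ∏ i ∈ s, z i := by
    rw [← prod_pow]
    refine prod_congr rfl fun i hi => ?_
    rw [← Real.rpow_natCast, ← Real.rpow_mul (hz i hi), inv_mul_cancel₀ hn, Real.rpow_one]
  have hmean : ∑ i ∈ s, (#s : ℝ)⁻¹ * z i = (∑ i ∈ s, z i) / #s := by
    rw [← mul_sum, inv_mul_eq_div]
  have hle : g ≤ (∑ i ∈ s, z i) / #s :=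
    hmean ▸ Real.geom_mean_le_arith_mean_weighted s _ z (fun _ _ => by positivity) hw hz
  have hge : (∑ i ∈ s, z i) / #s ≤ g :=
    (pow_le_pow_iff_left₀ (div_nonneg (sum_nonneg hz) (by positivity))
      (prod_nonneg fun i hi => Real.rpow_nonneg (hz i hi) _) hs.card_pos.ne').mp (hg ▸ h)
  exact (Real.geom_mean_eq_arith_mean_weighted_iff_of_pos s _ z (fun _ _ => by positivity) hw hz).mp
    (hmean ▸ le_antisymm hle hge)

noncomputable def wnormSq (d : ℕ) (j : Fin d) (q : Fin d → ℝ) : ℝ :=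
  ∑ i, (wvec d j i : ℝ) ^ 2 * q i ^ 2

lemma wvec_apply (d : ℕ) (j i : Fin d) :
    wvec d j i = if (i : ℕ) < j then 0 else if (i : ℕ) = j then (j : ℕ) + 1 else (i : ℕ) := by
  simp only [wvec, Fin.lt_def, Fin.ext_iff]

lemma D_eq_sqrt_wnormSq (d : ℕ) (j : Fin d) (q : Fin d → ℝ) :
    D d j q = Real.sqrt (wnormSq d j q) := rfl

section
variable {d : ℕ} {q : Fin d → ℝ}

lemma wnormSq_pos (hq : ∀ i, 0 < q i) (j : Fin d) : 0 < wnormSq d j q := by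
  refine sum_pos' (fun i _ => by positivity) ⟨j, mem_univ _, ?_⟩
  have := hq j
  simp only [wvec_apply, lt_irrefl, if_false, if_true]
  positivity

lemma minG_le (q : Fin d → ℝ) (j : Fin d) :
    minG d q ≤ (∏ i, q i) / Real.sqrt (wnormSq d j q) ^ d :=
  ciInf_le (Finite.bddBelow_range _) j

lemma minG_nonneg (hq : ∀ i, 0 ≤ q i) : 0 ≤ minG d q :=
  Real.iInf_nonneg fun _ => div_nonneg (prod_nonneg fun i _ => hq i) (by positivity)

lemma minG_sq_mul_pow_le (hq : ∀ i, 0 < q i) (j : Fin d) :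
    minG d q ^ 2 * wnormSq d j q ^ d ≤ (∏ i, q i) ^ 2 := by
  have hS := wnormSq_pos hq j
  calc minG d q ^ 2 * wnormSq d j q ^ d
      ≤ ((∏ i, q i) / Real.sqrt (wnormSq d j q) ^ d) ^ 2 * wnormSq d j q ^ d := by
        gcongr
        exacts [minG_nonneg fun i => (hq i).le, minG_le q j]
    _ = (∏ i, q i) ^ 2 := by
        rw [div_pow, ← pow_mul, mul_comm d 2, pow_mul, Real.sq_sqrt hS.le]
        field_simp

end

section
variable {d : ℕ}

/-- The coefficients of `2 D_1(q)² + D_2(q)²` as a combination of the `q_i²`. -/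
noncomputable def mixWeight (d : ℕ) (i : Fin d) : ℝ :=
  if (i : ℕ) = 0 then 2 else if (i : ℕ) = 1 then 6 else 3 * ((i : ℕ) : ℝ) ^ 2

lemma mixWeight_pos (i : Fin d) : 0 < mixWeight d i := by
  unfold mixWeight
  split_ifs with h0
  · norm_num
  · norm_num
  · have : (0 : ℝ) < (i : ℕ) := by exact_mod_cast Nat.pos_of_ne_zero h0
    positivity

variable (hd : 1 < d) (q : Fin d → ℝ)
include hd

lemma sum_mixWeight_mul_sq :
    ∑ i, mixWeight d i * q i ^ 2 = 2 * wnormSq d ⟨0, by omega⟩ q + wnormSq d ⟨1, hd⟩ q := by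
  rw [wnormSq, wnormSq, mul_sum, ← sum_add_distrib]
  refine sum_congr rfl fun ⟨i, hi⟩ _ => ?_
  simp only [mixWeight, wvec_apply]
  split_ifs <;> subst_vars <;> first | omega | (push_cast; ring1)

lemma wnormSq_one_add_sq_zero :
    wnormSq d ⟨1, hd⟩ q + q ⟨0, by omega⟩ ^ 2
      = wnormSq d ⟨0, by omega⟩ q + 3 * q ⟨1, hd⟩ ^ 2 := by
  calc wnormSq d ⟨1, hd⟩ q + q ⟨0, by omega⟩ ^ 2
      = ∑ i, ((wvec d ⟨1, hd⟩ i : ℝ) ^ 2 * q i ^ 2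
          + if i = ⟨0, by omega⟩ then q i ^ 2 else 0) := by
        rw [sum_add_distrib, Fintype.sum_ite_eq', wnormSq]
    _ = ∑ i, ((wvec d ⟨0, by omega⟩ i : ℝ) ^ 2 * q i ^ 2
          + if i = ⟨1, hd⟩ then 3 * q i ^ 2 else 0) := by
        refine sum_congr rfl fun ⟨i, hi⟩ _ => ?_
        simp only [wvec_apply, Fin.ext_iff]
        split_ifs <;> subst_vars <;> first | omega | (push_cast; ring1)
    _ = wnormSq d ⟨0, by omega⟩ q + 3 * q ⟨1, hd⟩ ^ 2 := by
        rw [sum_add_distrib, Fintype.sum_ite_eq', wnormSq]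

end

lemma wnormSq_add_sq_zero_le {d : ℕ} (q : Fin d → ℝ) (j : Fin d) (hj : 0 < (j : ℕ)) :
    wnormSq d j q + q ⟨0, j.pos⟩ ^ 2
      ≤ wnormSq d ⟨0, j.pos⟩ q + (2 * (j : ℕ) + 1) * q j ^ 2 := by
  calc wnormSq d j q + q ⟨0, j.pos⟩ ^ 2
      = ∑ i, ((wvec d j i : ℝ) ^ 2 * q i ^ 2 + if i = ⟨0, j.pos⟩ then q i ^ 2 else 0) := by
        rw [sum_add_distrib, Fintype.sum_ite_eq', wnormSq]
    _ ≤ ∑ i, ((wvec d ⟨0, j.pos⟩ i : ℝ) ^ 2 * q i ^ 2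
          + if i = j then (2 * (j : ℕ) + 1) * q i ^ 2 else 0) := by
        refine sum_le_sum fun ⟨i, hi⟩ _ => ?_
        simp only [wvec_apply, Fin.ext_iff]
        split_ifs <;> subst_vars <;>
          first | omega | (apply le_of_eq; push_cast; ring1) | (push_cast; ring_nf; positivity)
    _ = wnormSq d ⟨0, j.pos⟩ q + (2 * (j : ℕ) + 1) * q j ^ 2 := by
        rw [sum_add_distrib, Fintype.sum_ite_eq', wnormSq]

lemma mixWeight_mul_sq_eq_of_le {d : ℕ} (hd : 1 < d) {q : Fin d → ℝ} (hq : ∀ i, 0 < q i)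
    (h : (3 / d : ℝ) ^ d ≤ (∏ i, mixWeight d i) * minG d q ^ 2) (j k : Fin d) :
    mixWeight d j * q j ^ 2 = mixWeight d k * q k ^ 2 := by
  set A := wnormSq d ⟨0, by omega⟩ q
  set B := wnormSq d ⟨1, hd⟩ q
  have hminG : minG d q ^ 2 * max A B ^ d ≤ (∏ i, q i) ^ 2 := by
    rcases max_choice A B with h | h <;> rw [h] <;> exact minG_sq_mul_pow_le hq _
  have hmean : (∑ i, mixWeight d i * q i ^ 2) / d ≤ 3 / d * max A B := by
    rw [sum_mixWeight_mul_sq hd, div_mul_eq_mul_div, div_le_div_iff_of_pos_right (by positivity)]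
    linarith [le_max_left A B, le_max_right A B]
  have hz : ∀ i, 0 ≤ mixWeight d i * q i ^ 2 := fun i =>
    mul_nonneg (mixWeight_pos i).le (sq_nonneg _)
  have hAB : 0 ≤ max A B := (wnormSq_pos hq _).le.trans (le_max_left A B)
  have hamgm : ((∑ i, mixWeight d i * q i ^ 2) / d) ^ d ≤ ∏ i, mixWeight d i * q i ^ 2 := by
    calc ((∑ i, mixWeight d i * q i ^ 2) / d) ^ d
        ≤ (3 / d * max A B) ^ d := by
          gcongr
          exact div_nonneg (sum_nonneg fun i _ => hz i) (by positivity)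
      _ ≤ (∏ i, mixWeight d i) * minG d q ^ 2 * max A B ^ d := by rw [mul_pow]; gcongr
      _ ≤ (∏ i, mixWeight d i) * (∏ i, q i) ^ 2 := by
          rw [mul_assoc]
          exact mul_le_mul_of_nonneg_left hminG (prod_nonneg fun i _ => (mixWeight_pos i).le)
      _ = ∏ i, mixWeight d i * q i ^ 2 := by rw [prod_mul_distrib, prod_pow]
  exact Real.eq_of_arith_mean_pow_card_le_prod ⟨⟨0, by omega⟩, mem_univ _⟩
    (fun i _ => hz i) (by rwa [card_univ, Fintype.card_fin]) j (mem_univ _) k (mem_univ _)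

section
variable {d : ℕ}

lemma pstar_pos (i : Fin d) : 0 < pstar d i := by
  unfold pstar
  split_ifs with h0
  · norm_num
  · positivity
  · have : (0 : ℝ) < (i : ℕ) := by exact_mod_cast Nat.pos_of_ne_zero h0
    positivity

lemma mixWeight_mul_pstar_sq (i : Fin d) : mixWeight d i * pstar d i ^ 2 = 2 := by
  unfold mixWeight pstar
  split_ifs with h0
  · norm_num
  · norm_num [div_pow]
  · have : ((i : ℕ) : ℝ) ≠ 0 := by exact_mod_cast h0
    rw [div_pow, Real.sq_sqrt (by norm_num)]
    field_simp

lemma pstar_sq (i : Fin d) : pstar d i ^ 2 = 2 / mixWeight d i :=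
  eq_div_of_mul_eq (mixWeight_pos i).ne' (by rw [mul_comm, mixWeight_mul_pstar_sq])

lemma eq_pstar_of_mixWeight_mul_sq_eq_two {q : Fin d → ℝ} (hq : ∀ i, 0 < q i)
    (h : ∀ i, mixWeight d i * q i ^ 2 = 2) : q = pstar d := by
  funext i
  have hsq : q i ^ 2 = pstar d i ^ 2 :=
    mul_left_cancel₀ (mixWeight_pos i).ne' ((h i).trans (mixWeight_mul_pstar_sq i).symm)
  exact (pow_left_inj₀ (hq i).le (pstar_pos i).le two_ne_zero).mp hsq

lemma wnormSq_pstar_le (j : Fin d) : wnormSq d j (pstar d) ≤ wnormSq d ⟨0, j.pos⟩ (pstar d) := by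
  rcases Nat.eq_zero_or_pos (j : ℕ) with hj | hj
  · rw [show j = ⟨0, j.pos⟩ from Fin.ext hj]
  have hcoef : (2 * (j : ℕ) + 1) * pstar d j ^ 2 ≤ pstar d ⟨0, j.pos⟩ ^ 2 := by
    rw [pstar_sq, pstar_sq, mul_div_assoc', div_le_div_iff₀ (mixWeight_pos _) (mixWeight_pos _)]
    simp only [mixWeight, if_true, hj.ne', if_false]
    have hj' : (1 : ℝ) ≤ (j : ℕ) := by exact_mod_cast hj
    split_ifs with h1
    · norm_num [h1]
    · have hj2 : (2 : ℝ) ≤ (j : ℕ) := by exact_mod_cast (by omega : 2 ≤ (j : ℕ))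
      nlinarith
  linarith [wnormSq_add_sq_zero_le (pstar d) j hj]

variable (hd : 1 < d)
include hd

lemma wnormSq_one_pstar : wnormSq d ⟨1, hd⟩ (pstar d) = wnormSq d ⟨0, by omega⟩ (pstar d) := by
  have h := wnormSq_one_add_sq_zero hd (pstar d)
  rw [pstar_sq, pstar_sq] at h
  simp only [mixWeight, if_true, one_ne_zero, if_false] at h
  linarith

lemma wnormSq_zero_pstar : wnormSq d ⟨0, by omega⟩ (pstar d) = 2 * d / 3 := by
  have h := sum_mixWeight_mul_sq hd (pstar d)
  simp only [mixWeight_mul_pstar_sq, sum_const, card_univ, Fintype.card_fin, nsmul_eq_mul,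
    wnormSq_one_pstar hd] at h
  linarith

lemma minG_pstar : minG d (pstar d) = (∏ i, pstar d i) / Real.sqrt (2 * d / 3) ^ d := by
  have : Nonempty (Fin d) := ⟨⟨0, by omega⟩⟩
  refine le_antisymm (wnormSq_zero_pstar hd ▸ minG_le _ _) (le_ciInf fun j => ?_)
  rw [← wnormSq_zero_pstar hd]
  exact div_le_div_of_nonneg_left (prod_nonneg fun i _ => (pstar_pos i).le)
    (pow_pos (Real.sqrt_pos.mpr (wnormSq_pos pstar_pos j)) d)
    (pow_le_pow_left₀ (Real.sqrt_nonneg _) (Real.sqrt_le_sqrt (wnormSq_pstar_le j)) d)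

lemma prod_mixWeight_mul_minG_pstar_sq :
    (∏ i, mixWeight d i) * minG d (pstar d) ^ 2 = (3 / d : ℝ) ^ d := by
  have hprod : (∏ i, mixWeight d i) * (∏ i, pstar d i) ^ 2 = 2 ^ d := by
    rw [← prod_pow, ← prod_mul_distrib]
    simp [mixWeight_mul_pstar_sq]
  have hd' : (d : ℝ) ≠ 0 := by positivity
  rw [minG_pstar hd, div_pow, ← pow_mul, mul_comm d 2, pow_mul,
    Real.sq_sqrt (by positivity), mul_div_assoc', hprod, ← div_pow]
  congr 1
  field_simp

end

/-- If `p` is a maximizer, then `D_2(p) = D_1(p) = max_j D_j(p)`, and moreover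
`p_2 = 1/√3` and `p_j = √(2/3)/(j−1)` for `j ∈ {3,…,d}`. -/
theorem stmt10 (d : ℕ) (hd : 2 ≤ d) (p : Fin d → ℝ)
    (hp : ∀ i, 0 < p i) (h1 : p ⟨0, by omega⟩ = 1)
    (hmax : ∀ q : Fin d → ℝ, (∀ i, 0 < q i) → minG d q ≤ minG d p) :
    D d ⟨1, by omega⟩ p = D d ⟨0, by omega⟩ p ∧
      IsGreatest (Set.range fun j : Fin d => D d j p) (D d ⟨0, by omega⟩ p) ∧
      p ⟨1, by omega⟩ = 1 / Real.sqrt 3 ∧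
      ∀ j : Fin d, 2 ≤ (j : ℕ) → p j = Real.sqrt (2 / 3) / ((j : ℕ) : ℝ) := by
  have hext : (3 / d : ℝ) ^ d ≤ (∏ i, mixWeight d i) * minG d p ^ 2 := by
    rw [← prod_mixWeight_mul_minG_pstar_sq hd]
    gcongr
    · exact prod_nonneg fun i _ => (mixWeight_pos i).le
    · exact minG_nonneg fun i => (pstar_pos i).le
    · exact hmax _ pstar_pos
  obtain rfl : p = pstar d := eq_pstar_of_mixWeight_mul_sq_eq_two hp fun i => by
    rw [mixWeight_mul_sq_eq_of_le hd hp hext i ⟨0, by omega⟩, h1]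
    simp [mixWeight]
  refine ⟨?_, ⟨⟨_, rfl⟩, ?_⟩, ?_, fun j hj => ?_⟩
  · rw [D_eq_sqrt_wnormSq, D_eq_sqrt_wnormSq, wnormSq_one_pstar hd]
  · rintro _ ⟨j, rfl⟩
    exact Real.sqrt_le_sqrt (wnormSq_pstar_le j)
  · simp [pstar]
  · simp [pstar, show (j : ℕ) ≠ 0 by omega, show (j : ℕ) ≠ 1 by omega]
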